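/- Let A be a UTA all of whose atomic constraints in guards use the weak inequality ≤, M the maximum constant in its guards, and L the maximum absolute value of a constant in its updates (0 if none). Let (q₀, ctx₀[c₀]) → (q₁, ctx₁[c₁]) → ⋯ → (q_n, ctx_n[c_n]) be a propagation sequence with c₀ ≤ max(M, L) and c_n > max(M, L) + 2·L·|Q|·|X|². Then there exist indices 0 < i < j ≤ n such that (q_i, ctx_i) = (q_j, ctx_j), c_i < c_j, and c_k > max(M, L) for all i ≤ k ≤ j. -/

import Mathlib

open Classical

/-- Comparison operator `◁ ∈ {<, ≤}`. -/
inductive Ineq where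
  | lt
  | le

def Ineq.holds : Ineq → ℝ → ℝ → Prop
  | .lt, a, b => a < b
  | .le, a, b => a ≤ b

/-- Atomic constraints over a set `X` of clocks. -/
inductive AC (X : Type) where
  | tt
  | ff
  | upper (x : X) (o : Ineq) (c : ℕ)              -- x ◁ c
  | lower (c : ℕ) (o : Ineq) (x : X)              -- c ◁ x
  | dUpper (x y : X) (o : Ineq) (c : ℕ)           -- x - y ◁ c
  | dLower (c : ℕ) (o : Ineq) (x y : X)           -- c ◁ x - y

/-- A valuation maps clocks to nonnegative reals. -/
abbrev Val (X : Type) := X → NNReal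

def AC.sat {X : Type} (v : Val X) : AC X → Prop
  | .tt => True
  | .ff => False
  | .upper x o c => o.holds (v x : ℝ) (c : ℝ)
  | .lower c o x => o.holds (c : ℝ) (v x : ℝ)
  | .dUpper x y o c => o.holds ((v x : ℝ) - (v y : ℝ)) (c : ℝ)
  | .dLower c o x y => o.holds (c : ℝ) ((v x : ℝ) - (v y : ℝ))

/-- A constraint (guard) is a finite conjunction of atomic constraints. -/
abbrev Guard (X : Type) := List (AC X)

def satG {X : Type} (v : Val X) (g : Guard X) : Prop := ∀ φ ∈ g, AC.sat v φ

/-- The valuation `v + δ`. -/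
def delay {X : Type} (v : Val X) (δ : NNReal) : Val X := fun x => v x + δ

/-- `v ⊑_G v'` for a set `G` of atomic constraints. -/
def simS {X : Type} (G : Set (AC X)) (v v' : Val X) : Prop :=
  ∀ δ : NNReal, ∀ φ ∈ G, AC.sat (delay v δ) φ → AC.sat (delay v' δ) φ

/-- `v ⊑_φ v'` for a single constraint `φ` (a conjunction of atomic constraints). -/
def simC {X : Type} (g : Guard X) (v v' : Val X) : Prop :=
  ∀ δ : NNReal, satG (delay v δ) g → satG (delay v' δ) g

/-- Right-hand side of an atomic update: `x := c` or `x := y + d`. -/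
inductive Rhs (X : Type) where
  | const (c : ℕ)
  | clock (y : X) (d : ℤ)

/-- An update assigns a right-hand side to every clock. -/
abbrev Update (X : Type) := X → Rhs X

def Rhs.eval {X : Type} (v : Val X) : Rhs X → ℝ
  | .const c => (c : ℝ)
  | .clock y d => (v y : ℝ) + (d : ℝ)

/-- `up(v) ≥ 0`. -/
def Update.nonneg {X : Type} (up : Update X) (v : Val X) : Prop :=
  ∀ x, 0 ≤ Rhs.eval v (up x)

/-- The valuation `up(v)` (meaningful when `up.nonneg v`). -/
noncomputable def Update.app {X : Type} (up : Update X) (v : Val X) : Val X :=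
  fun x => Real.toNNReal (Rhs.eval v (up x))

/-- `up⁻¹(φ)` for an atomic constraint `φ`: simultaneous substitution of `up_x` for `x`
rewritten to an equivalent atomic constraint (possibly ⊤ or ⊥). -/
noncomputable def upInvA {X : Type} (up : Update X) : AC X → AC X
  | .tt => .tt
  | .ff => .ff
  | .upper x o c =>
      match up x with
      | .const a => if o.holds (a : ℝ) (c : ℝ) then .tt else .ff
      | .clock y d => if (c : ℤ) - d < 0 then .ff else .upper y o ((c : ℤ) - d).toNat
  | .lower c o x =>
      match up x with
      | .const a => if o.holds (c : ℝ) (a : ℝ) then .tt else .ff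
      | .clock y d => if (c : ℤ) - d < 0 then .tt else .lower ((c : ℤ) - d).toNat o y
  | .dUpper x y o c =>
      match up x, up y with
      | .const a, .const b => if o.holds ((a : ℝ) - (b : ℝ)) (c : ℝ) then .tt else .ff
      | .const a, .clock z e =>
          if (a : ℤ) - e - (c : ℤ) < 0 then .tt
          else .lower ((a : ℤ) - e - (c : ℤ)).toNat o z
      | .clock z e, .const b =>
          if (c : ℤ) + (b : ℤ) - e < 0 then .ff
          else .upper z o ((c : ℤ) + (b : ℤ) - e).toNat
      | .clock z e, .clock w f =>
          if (c : ℤ) - e + f < 0 then .dLower (-((c : ℤ) - e + f)).toNat o w z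
          else .dUpper z w o ((c : ℤ) - e + f).toNat
  | .dLower c o x y =>
      match up x, up y with
      | .const a, .const b => if o.holds (c : ℝ) ((a : ℝ) - (b : ℝ)) then .tt else .ff
      | .const a, .clock z e =>
          if (a : ℤ) - e - (c : ℤ) < 0 then .ff
          else .upper z o ((a : ℤ) - e - (c : ℤ)).toNat
      | .clock z e, .const b =>
          if (c : ℤ) + (b : ℤ) - e < 0 then .tt
          else .lower ((c : ℤ) + (b : ℤ) - e).toNat o z
      | .clock z e, .clock w f =>
          if (c : ℤ) - e + f < 0 then .dUpper w z o (-((c : ℤ) - e + f)).toNat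
          else .dLower ((c : ℤ) - e + f).toNat o z w

/-- `up⁻¹` of a conjunction of atomic constraints. -/
noncomputable def upInvC {X : Type} (up : Update X) (g : Guard X) : Guard X :=
  g.map (upInvA up)

/-- The guard `g` contains an upper-bound constraint `x ◁₁ c` on clock `x`. -/
def hasUpperG {X : Type} (g : Guard X) (x : X) : Prop := ∃ o c, AC.upper x o c ∈ g

/-- The smallest constant of an upper-bound constraint on `x` in `g`. -/
noncomputable def minUpperG {X : Type} (g : Guard X) (x : X) : ℕ :=
  sInf {c | ∃ o, AC.upper x o c ∈ g}

/-- Condition of Case 3 of the table defining `wp`. -/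
def case3G {X : Type} (g : Guard X) (x y : X) (d : ℕ) : Prop :=
  (∃ o c, AC.upper x o c ∈ g ∧ c < d) ∨
  (∃ o c, AC.dUpper x y o c ∈ g ∧ c < d) ∨
  (∃ o e, AC.dLower e o x y ∈ g ∧ d < e)

/-- The pre `wp(φ, g, up)` of an atomic constraint under a guard-update pair. -/
noncomputable def wp {X : Type} (φ : AC X) (g : Guard X) (up : Update X) : AC X :=
  match upInvA up φ with
  | .upper x o d => if hasUpperG g x then .tt else .upper x o d
  | .lower d o x =>
      if hasUpperG g x ∧ minUpperG g x < d then .lower (minUpperG g x) .le x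
      else .lower d o x
  | .dUpper x y o d => if case3G g x y d then .tt else .dUpper x y o d
  | .dLower d o x y => if case3G g x y d then .tt else .dLower d o x y
  | ψ => ψ

/-- A transition of an updatable timed automaton. -/
structure UTrans (Q X : Type) where
  src : Q
  guard : Guard X
  update : Update X
  tgt : Q

/-- An updatable timed automaton (UTA). -/
structure UTA (Q X : Type) where
  init : Q
  trans : List (UTrans Q X)
  acc : Set Q

/-- (Non-reduced) G-map. -/
def IsGMap {Q X : Type} (A : UTA Q X) (G : Q → Set (AC X)) : Prop :=
  ∀ t ∈ A.trans,
    (∀ φ ∈ t.guard, φ ∈ G t.src) ∧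
    (∀ x : X, upInvA t.update (AC.lower 0 .le x) ∈ G t.src) ∧
    (∀ φ ∈ G t.tgt, upInvA t.update φ ∈ G t.src)

/-- Reduced G-map. -/
def IsRedGMap {Q X : Type} (A : UTA Q X) (G : Q → Set (AC X)) : Prop :=
  ∀ t ∈ A.trans,
    (∀ φ ∈ t.guard, φ ∈ G t.src) ∧
    (∀ x : X, wp (AC.lower 0 .le x) t.guard t.update ∈ G t.src) ∧
    (∀ φ ∈ G t.tgt, wp φ t.guard t.update ∈ G t.src)

/-- Pointwise intersection of all G-maps: the smallest G-map. -/
def minGMap {Q X : Type} (A : UTA Q X) : Q → Set (AC X) :=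
  fun q => ⋂ G ∈ {G | IsGMap A G}, G q

/-- Pointwise intersection of all reduced G-maps: the smallest reduced G-map. -/
def minRedGMap {Q X : Type} (A : UTA Q X) : Q → Set (AC X) :=
  fun q => ⋂ G ∈ {G | IsRedGMap A G}, G q

/-- Action transition `(q, v) →t (q', up(v))` of the UTA semantics. -/
def actionStep {Q X : Type} (A : UTA Q X) (t : UTrans Q X) (c c' : Q × Val X) : Prop :=
  t ∈ A.trans ∧ c.1 = t.src ∧ c'.1 = t.tgt ∧ satG c.2 t.guard ∧
  t.update.nonneg c.2 ∧ c'.2 = t.update.app c.2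

/-- A simulation on the UTA semantics: a preorder relating only configurations with
the same state, preserved by delays and actions. -/
def IsSimulation {Q X : Type} (A : UTA Q X)
    (R : (Q × Val X) → (Q × Val X) → Prop) : Prop :=
  (∀ p, R p p) ∧
  (∀ p₁ p₂ p₃, R p₁ p₂ → R p₂ p₃ → R p₁ p₃) ∧
  (∀ p p', R p p' → p.1 = p'.1) ∧
  (∀ q (v v' : Val X) (δ : NNReal), R (q, v) (q, v') → R (q, delay v δ) (q, delay v' δ)) ∧
  (∀ q (v v' : Val X) t p₁, R (q, v) (q, v') → actionStep A t (q, v) p₁ →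
      ∃ v₁', actionStep A t (q, v') (p₁.1, v₁') ∧ R p₁ (p₁.1, v₁'))

/-- A run of a UTA: alternating delays and actions from the initial configuration. -/
def IsRun {Q X : Type} (A : UTA Q X) (n : ℕ) (qs : ℕ → Q) (ds : ℕ → NNReal)
    (vs : ℕ → Val X) : Prop :=
  qs 0 = A.init ∧ (∀ x, vs 0 x = 0) ∧
  ∀ i, i < n → ∃ t, actionStep A t (qs i, delay (vs i) (ds i)) (qs (i + 1), vs (i + 1))

/-- Configurations occurring on some run of the UTA. -/
def ReachCfg {Q X : Type} (A : UTA Q X) (p : Q × Val X) : Prop :=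
  ∃ n qs ds vs, IsRun A n qs ds vs ∧ ∃ δ : NNReal, p.1 = qs n ∧ p.2 = delay (vs n) δ

/-- Timed automaton with subtraction: every atomic update is `x := 0` or `x := x - c`. -/
def IsSubtractionTA {Q X : Type} (A : UTA Q X) : Prop :=
  ∀ t ∈ A.trans, ∀ x : X,
    t.update x = Rhs.const 0 ∨ ∃ c : ℕ, t.update x = Rhs.clock x (-(c : ℤ))

/-- Timed automaton with bounded subtraction with bounds `M`. -/
def IsBoundedSub {Q X : Type} (A : UTA Q X) (M : X → ℕ) : Prop :=
  IsSubtractionTA A ∧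
  ∀ q v, ReachCfg A (q, v) → ∀ t ∈ A.trans, t.src = q → satG v t.guard →
    ∀ (x : X) (c : ℕ), 0 < c → t.update x = Rhs.clock x (-(c : ℤ)) → (v x : ℝ) ≤ (M x : ℝ)

/-- Timed automaton with syntactically bounded subtraction. -/
def IsSynBoundedSub {Q X : Type} (A : UTA Q X) : Prop :=
  IsSubtractionTA A ∧
  ∀ t ∈ A.trans, ∀ (x : X) (c : ℕ), 0 < c → t.update x = Rhs.clock x (-(c : ℤ)) →
    ∃ o c', AC.upper x o c' ∈ t.guard

/-- The constant of an atomic constraint. -/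
def AC.cst {X : Type} : AC X → ℕ
  | .tt => 0
  | .ff => 0
  | .upper _ _ c => c
  | .lower c _ _ => c
  | .dUpper _ _ _ c => c
  | .dLower c _ _ _ => c

/-- The constant occurring in the right-hand side of an atomic update. -/
def Rhs.cst {X : Type} : Rhs X → ℕ
  | .const c => c
  | .clock _ d => d.natAbs

/-- Maximum constant occurring in the guards of a UTA. -/
def maxGuardConst {Q X : Type} (A : UTA Q X) : ℕ :=
  (A.trans.map fun t => (t.guard.map AC.cst).foldr max 0).foldr max 0

/-- Maximum absolute value of a constant occurring in the updates of a UTA. -/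
noncomputable def maxUpdateConst {Q X : Type} [Fintype X] (A : UTA Q X) : ℕ :=
  (A.trans.map fun t => Finset.univ.sup fun x => Rhs.cst (t.update x)).foldr max 0

/-- `L(G)(x)`: maximum constant of a lower-bound constraint on `x` in `G` (⊥ = −∞ if none). -/
noncomputable def Lb {X : Type} (G : Set (AC X)) (x : X) : WithBot ℕ∞ :=
  ⨆ c ∈ {c : ℕ | ∃ o, AC.lower c o x ∈ G}, ((c : ℕ∞) : WithBot ℕ∞)

/-- `U(G)(x)`: maximum constant of an upper-bound constraint on `x` in `G` (⊥ = −∞ if none). -/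
noncomputable def Ub {X : Type} (G : Set (AC X)) (x : X) : WithBot ℕ∞ :=
  ⨆ c ∈ {c : ℕ | ∃ o, AC.upper x o c ∈ G}, ((c : ℕ∞) : WithBot ℕ∞)

def AC.isDiag {X : Type} : AC X → Prop
  | .dUpper _ _ _ _ => True
  | .dLower _ _ _ _ => True
  | _ => False

/-- `G^d`: the diagonal constraints of `G`. -/
def diagOf {X : Type} (G : Set (AC X)) : Set (AC X) := {φ ∈ G | φ.isDiag}

def AC.isWeak {X : Type} : AC X → Prop
  | .upper _ o _ => o = .le
  | .lower _ o _ => o = .le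
  | .dUpper _ _ o _ => o = .le
  | .dLower _ o _ _ => o = .le
  | _ => True

/-- All atomic constraints in guards of `A` use the weak inequality `≤`. -/
def weakGuards {Q X : Type} (A : UTA Q X) : Prop :=
  ∀ t ∈ A.trans, ∀ φ ∈ t.guard, φ.isWeak

/-- A context: an atomic constraint with a hole for the constant. -/
inductive Ctx (X : Type) where
  | upper (x : X)      -- x ≤ ·
  | lower (x : X)      -- · ≤ x
  | dUpper (x y : X)   -- x - y ≤ ·
  | dLower (x y : X)   -- · ≤ x - y

def Ctx.fill {X : Type} : Ctx X → ℕ → AC X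
  | .upper x, c => .upper x .le c
  | .lower x, c => .lower c .le x
  | .dUpper x y, c => .dUpper x y .le c
  | .dLower x y, c => .dLower c .le x y

/-- Propagation sequence `(q_i, ctx_i[c_i]) → ⋯ → (q_j, ctx_j[c_j])`. -/
def PropSeq {Q X : Type} (A : UTA Q X) (i j : ℕ) (qs : ℕ → Q) (ctxs : ℕ → Ctx X)
    (cs : ℕ → ℕ) : Prop :=
  ∀ k, i ≤ k → k < j → ∃ t ∈ A.trans, t.src = qs (k + 1) ∧ t.tgt = qs k ∧
    (ctxs (k + 1)).fill (cs (k + 1)) = wp ((ctxs k).fill (cs k)) t.guard t.update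

/-!
Let `B = max(M, L)` and let `m` be the last index with `c_m ≤ B`. If no pair `(q, ctx)` recurs
after `m` with a larger constant, then `c_n` exceeds `c_m` by at most the sum, over the distinct
pairs met after `m`, of the largest increase of a single step: a recurring pair brings no gain.
Above `B`, `wp` is just `up⁻¹` (the guard cases produce `⊤` or constants `≤ M`), so one step
raises the constant by at most `2L`. Contexts on a single clock (`x ≤ ·`, `· ≤ x`, `x - x ≤ ·`,
`· ≤ x - x`) are never left again, keep their shape and grow by at most `L` per step, and a
difference `x - y` with `x ≠ y` never switches between `≤ ·` and `· ≤`, as that would need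
`c + c' ≤ 2L`. Hence after `m` we meet at most `|Q|(|X|² - |X|)` pairs of the latter kind and then
at most `|Q||X|` single-clock pairs, so `c_n ≤ B + 2L|Q|(|X|² - |X|) + 2L + L(|Q||X| - 1)`,
which is at most `B + 2L|Q||X|²`.
-/

namespace Ctx

variable {X : Type}

def shape : Ctx X → Ctx Unit
  | upper _ => upper ()
  | lower _ => lower ()
  | dUpper _ _ => dUpper () ()
  | dLower _ _ => dLower () ()

def clocks : Ctx X → X × X
  | upper x => (x, x)
  | lower x => (x, x)
  | dUpper x y => (x, y)
  | dLower x y => (x, y)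

def SingleClock (ctx : Ctx X) : Prop := ctx.clocks.1 = ctx.clocks.2

theorem eq_of_shape_eq_of_clocks_eq {ctx ctx' : Ctx X} (hs : ctx.shape = ctx'.shape)
    (hc : ctx.clocks = ctx'.clocks) : ctx = ctx' := by
  cases ctx <;> cases ctx' <;> simp_all [shape, clocks]

end Ctx

section UpInv

variable {X : Type} {up : Update X} {L : ℕ} {ctx ctx' : Ctx X} {c c' : ℕ}

theorem upInvA_fill_cst_le (hup : ∀ z, (up z).cst ≤ L)
    (h : upInvA up (ctx.fill c) = ctx'.fill c') : c' ≤ c + 2 * L := by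
  cases ctx with
  | upper x | lower x =>
    have hx := hup x
    rcases hux : up x with a | ⟨y, d⟩ <;>
      simp only [Ctx.fill, upInvA, hux, Rhs.cst] at h hx <;> split_ifs at h <;>
      cases ctx' <;> simp_all
    all_goals omega
  | dUpper x y | dLower x y =>
    have hx := hup x; have hy := hup y
    rcases hux : up x with a | ⟨z, e⟩ <;> rcases huy : up y with b | ⟨w, f⟩ <;>
      simp only [Ctx.fill, upInvA, hux, huy, Rhs.cst] at h hx hy <;> split_ifs at h <;>
      cases ctx' <;> simp_all
    all_goals omega

theorem upInvA_fill_of_singleClock (hup : ∀ z, (up z).cst ≤ L)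
    (h : upInvA up (ctx.fill c) = ctx'.fill c') (hctx : ctx.SingleClock) :
    ctx'.SingleClock ∧ ctx'.shape = ctx.shape ∧ c' ≤ c + L := by
  cases ctx with
  | upper x | lower x =>
    have hx := hup x
    rcases hux : up x with a | ⟨y, d⟩ <;>
      simp only [Ctx.fill, upInvA, hux, Rhs.cst] at h hx <;> split_ifs at h <;>
      cases ctx' <;> simp_all [Ctx.SingleClock, Ctx.shape, Ctx.clocks]
    all_goals omega
  | dUpper x y | dLower x y =>
    obtain rfl : x = y := hctx
    have hx := hup x
    rcases hux : up x with a | ⟨z, e⟩ <;>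
      simp only [Ctx.fill, upInvA, hux, Rhs.cst] at h hx <;> split_ifs at h <;>
      cases ctx' <;> simp_all [Ctx.SingleClock, Ctx.shape, Ctx.clocks]
    all_goals grind

theorem upInvA_fill_shape_eq (hup : ∀ z, (up z).cst ≤ L)
    (h : upInvA up (ctx.fill c) = ctx'.fill c') (hcc' : 2 * L < c + c')
    (hctx' : ¬ctx'.SingleClock) : ctx'.shape = ctx.shape := by
  cases ctx with
  | upper x | lower x =>
    rcases hux : up x with a | ⟨y, d⟩ <;>
      simp only [Ctx.fill, upInvA, hux] at h <;> split_ifs at h <;>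
      cases ctx' <;> simp_all [Ctx.SingleClock, Ctx.clocks]
  | dUpper x y | dLower x y =>
    have hx := hup x; have hy := hup y
    rcases hux : up x with a | ⟨z, e⟩ <;> rcases huy : up y with b | ⟨w, f⟩ <;>
      simp only [Ctx.fill, upInvA, hux, huy, Rhs.cst] at h hx hy <;> split_ifs at h <;>
      cases ctx' <;> simp_all [Ctx.SingleClock, Ctx.shape, Ctx.clocks]
    all_goals omega

theorem upInvA_eq_of_wp_eq_fill {φ : AC X} {g : Guard X} {M : ℕ} (hg : ∀ ψ ∈ g, ψ.cst ≤ M)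
    (hc' : M < c') (h : wp φ g up = ctx'.fill c') : upInvA up φ = ctx'.fill c' := by
  have hmin : ∀ x, hasUpperG g x → minUpperG g x ≠ c' := by
    rintro x ⟨o, c, hc⟩
    have := Nat.sInf_le (show c ∈ {c | ∃ o, AC.upper x o c ∈ g} from ⟨o, hc⟩)
    exact ne_of_lt (lt_of_le_of_lt (this.trans (hg _ hc)) hc')
  rcases hφ : upInvA up φ <;> simp only [wp, hφ] at h ⊢
  all_goals (try split_ifs at h)
  all_goals cases ctx' <;> simp_all [Ctx.fill]

end UpInv

section Counting

open Finset

theorem add_le_add_mul_card_image_Icc {α : Type*} [DecidableEq α] {f : ℕ → α} {c : ℕ → ℕ}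
    {δ a b : ℕ} (hab : a ≤ b) (hstep : ∀ k, a ≤ k → k < b → c (k + 1) ≤ c k + δ)
    (hrep : ∀ i j, a ≤ i → i < j → j ≤ b → f i = f j → c j ≤ c i) :
    c b + δ ≤ c a + δ * #((Icc a b).image f) := by
  induction b using Nat.strong_induction_on with
  | _ b ih =>
    obtain rfl | hab := hab.eq_or_lt
    · simp
    obtain ⟨k, rfl⟩ : ∃ k, b = k + 1 := ⟨b - 1, by omega⟩
    have ih' : ∀ j, a ≤ j → j ≤ k → c j + δ ≤ c a + δ * #((Icc a j).image f) :=
      fun j h1 h2 => ih j (by omega) h1 (fun i h3 h4 => hstep i h3 (by omega))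
        (fun i i' h3 h4 h5 => hrep i i' h3 h4 (by omega))
    rw [← insert_Icc_right_eq_Icc_add_one (by omega), image_insert]
    by_cases hseen : f (k + 1) ∈ (Icc a k).image f
    · obtain ⟨j, hj, hfj⟩ := mem_image.1 hseen
      rw [mem_Icc] at hj
      calc c (k + 1) + δ ≤ c j + δ := by gcongr; exact hrep j (k + 1) hj.1 (by omega) le_rfl hfj
        _ ≤ c a + δ * #((Icc a j).image f) := ih' j hj.1 hj.2
        _ ≤ _ := by
          gcongr
          exact (image_subset_image (Icc_subset_Icc_right hj.2)).trans (subset_insert _ _)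
    · rw [card_insert_of_notMem hseen, mul_add_one]
      have := hstep k (by omega) (by omega)
      have := ih' k (by omega) le_rfl
      omega

theorem le_add_mul_card_image_Ioc {α : Type*} [DecidableEq α] {f : ℕ → α} {c : ℕ → ℕ}
    {δ a b : ℕ} (hab : a ≤ b) (hstep : ∀ k, a ≤ k → k < b → c (k + 1) ≤ c k + δ)
    (hrep : ∀ i j, a < i → i < j → j ≤ b → f i = f j → c j ≤ c i) :
    c b ≤ c a + δ * #((Ioc a b).image f) := by
  obtain rfl | hab := hab.eq_or_lt
  · simp
  have hIcc := add_le_add_mul_card_image_Icc (f := f) (a := a + 1) hab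
    (fun k h1 h2 => hstep k (by omega) h2) (fun i j h1 => hrep i j (by omega))
  rw [Icc_add_one_left_eq_Ioc] at hIcc
  have := hstep a le_rfl hab
  omega

theorem card_le_of_shape_eq_of_clocks_mem {Q X : Type} [Fintype Q] {S : Finset (Q × Ctx X)}
    {κ : Ctx Unit} {T : Finset (X × X)} (h : ∀ p ∈ S, p.2.shape = κ ∧ p.2.clocks ∈ T) :
    #S ≤ Fintype.card Q * #T := by
  rw [← card_univ, ← card_product]
  refine card_le_card_of_injOn (fun p => (p.1, p.2.clocks))
    (fun p hp => mem_product.2 ⟨mem_univ _, (h p hp).2⟩) ?_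
  intro p hp p' hp' hpp'
  simp only [Prod.mk.injEq] at hpp'
  exact Prod.ext hpp'.1
    (Ctx.eq_of_shape_eq_of_clocks_eq ((h p hp).1.trans (h p' hp').1.symm) hpp'.2)

theorem exists_last_index_of_not {P : ℕ → Prop} [DecidablePred P] {n : ℕ} (h0 : P 0)
    (hn : ¬P n) : ∃ m < n, P m ∧ ∀ k, m < k → k ≤ n → ¬P k := by
  have hm : P (Nat.findGreatest P n) := Nat.findGreatest_spec (Nat.zero_le n) h0
  refine ⟨Nat.findGreatest P n, (Nat.findGreatest_le n).lt_of_ne ?_, hm,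
    fun k hk hkn => Nat.findGreatest_is_greatest hk hkn⟩
  rintro h
  exact hn (h ▸ hm)

end Counting

section Phases

open Finset

variable {Q X : Type} [Fintype Q] [Fintype X] {qs : ℕ → Q} {ctxs : ℕ → Ctx X} {cs : ℕ → ℕ}
  {L : ℕ}

theorem le_add_of_forall_not_singleClock {m p : ℕ} (hmp : m ≤ p)
    (hdiag : ∀ k, m < k → k ≤ p → ¬(ctxs k).SingleClock)
    (hshape : ∀ k, m < k → k < p → (ctxs (k + 1)).shape = (ctxs k).shape)
    (hstep : ∀ k, m ≤ k → k < p → cs (k + 1) ≤ cs k + 2 * L)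
    (hrep : ∀ i j, m < i → i < j → j ≤ p → qs i = qs j → ctxs i = ctxs j → cs j ≤ cs i) :
    cs p ≤ cs m +
      2 * L * (Fintype.card Q * (Fintype.card X * Fintype.card X - Fintype.card X)) := by
  have hconst : ∀ k, m + 1 ≤ k → k ≤ p → (ctxs k).shape = (ctxs (m + 1)).shape := by
    intro k hk
    induction k, hk using Nat.le_induction with
    | base => exact fun _ => rfl
    | succ k hk ih => exact fun hkp => (hshape k (by omega) (by omega)).trans (ih (by omega))
  have hcard : #((Ioc m p).image fun k => (qs k, ctxs k)) ≤
      Fintype.card Q * #(univ.offDiag : Finset (X × X)) := by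
    refine card_le_of_shape_eq_of_clocks_mem (κ := (ctxs (m + 1)).shape) fun x hx => ?_
    obtain ⟨k, hk, rfl⟩ := mem_image.1 hx
    rw [mem_Ioc] at hk
    exact ⟨hconst k (by omega) hk.2, mem_offDiag.2 ⟨mem_univ _, mem_univ _, hdiag k hk.1 hk.2⟩⟩
  rw [offDiag_card, card_univ] at hcard
  calc cs p ≤ cs m + 2 * L * #((Ioc m p).image fun k => (qs k, ctxs k)) :=
        le_add_mul_card_image_Ioc hmp hstep fun i j hi hij hj hf =>
          hrep i j hi hij hj (congrArg Prod.fst hf) (congrArg Prod.snd hf)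
    _ ≤ _ := by gcongr

theorem add_le_add_of_singleClock {s n : ℕ} (hsn : s ≤ n) (hs : (ctxs s).SingleClock)
    (hstep : ∀ k, s ≤ k → k < n → (ctxs k).SingleClock →
      (ctxs (k + 1)).SingleClock ∧ (ctxs (k + 1)).shape = (ctxs k).shape ∧ cs (k + 1) ≤ cs k + L)
    (hrep : ∀ i j, s ≤ i → i < j → j ≤ n → qs i = qs j → ctxs i = ctxs j → cs j ≤ cs i) :
    cs n + L ≤ cs s + L * (Fintype.card Q * Fintype.card X) := by
  have hinv : ∀ k, s ≤ k → k ≤ n → (ctxs k).SingleClock ∧ (ctxs k).shape = (ctxs s).shape := by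
    intro k hk
    induction k, hk using Nat.le_induction with
    | base => exact fun _ => ⟨hs, rfl⟩
    | succ k hk ih =>
      intro hkn
      obtain ⟨hk1, hk2⟩ := ih (by omega)
      obtain ⟨h1, h2, -⟩ := hstep k hk (by omega) hk1
      exact ⟨h1, h2.trans hk2⟩
  have hcard : #((Icc s n).image fun k => (qs k, ctxs k)) ≤
      Fintype.card Q * #(univ.diag : Finset (X × X)) := by
    refine card_le_of_shape_eq_of_clocks_mem (κ := (ctxs s).shape) fun x hx => ?_
    obtain ⟨k, hk, rfl⟩ := mem_image.1 hx
    rw [mem_Icc] at hk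
    obtain ⟨hk1, hk2⟩ := hinv k hk.1 hk.2
    exact ⟨hk2, mem_diag.2 ⟨mem_univ _, hk1⟩⟩
  rw [diag_card, card_univ] at hcard
  calc cs n + L ≤ cs s + L * #((Icc s n).image fun k => (qs k, ctxs k)) :=
        add_le_add_mul_card_image_Icc hsn
          (fun k hk hkn => (hstep k hk hkn (hinv k hk hkn.le).1).2.2)
          fun i j hi hij hj hf => hrep i j hi hij hj (congrArg Prod.fst hf) (congrArg Prod.snd hf)
    _ ≤ _ := by gcongr

end Phases

section Automaton

variable {Q X : Type}

theorem cst_le_maxGuardConst {A : UTA Q X} {t : UTrans Q X} (ht : t ∈ A.trans) {φ : AC X}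
    (hφ : φ ∈ t.guard) : φ.cst ≤ maxGuardConst A :=
  List.le_max_of_le' 0 (List.mem_map_of_mem ht)
    (List.le_max_of_le' 0 (List.mem_map_of_mem hφ) le_rfl)

theorem cst_le_maxUpdateConst [Fintype X] {A : UTA Q X} {t : UTrans Q X} (ht : t ∈ A.trans)
    (z : X) : (t.update z).cst ≤ maxUpdateConst A :=
  List.le_max_of_le' 0 (List.mem_map_of_mem ht) (Finset.le_sup (f := fun z => (t.update z).cst)
    (Finset.mem_univ z))

namespace PropSeq

variable [Fintype X] {A : UTA Q X} {m n : ℕ} {qs : ℕ → Q} {ctxs : ℕ → Ctx X} {cs : ℕ → ℕ}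
  {k : ℕ}

theorem exists_upInvA_eq (hp : PropSeq A m n qs ctxs cs) (hmk : m ≤ k) (hkn : k < n)
    (hk : maxGuardConst A < cs (k + 1)) :
    ∃ up : Update X, (∀ z, (up z).cst ≤ maxUpdateConst A) ∧
      upInvA up ((ctxs k).fill (cs k)) = (ctxs (k + 1)).fill (cs (k + 1)) := by
  obtain ⟨t, ht, -, -, hwp⟩ := hp k hmk hkn
  exact ⟨t.update, cst_le_maxUpdateConst ht,
    upInvA_eq_of_wp_eq_fill (fun ψ hψ => cst_le_maxGuardConst ht hψ) hk hwp.symm⟩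

theorem cs_succ_le (hp : PropSeq A m n qs ctxs cs) (hmk : m ≤ k) (hkn : k < n)
    (hk : maxGuardConst A < cs (k + 1)) : cs (k + 1) ≤ cs k + 2 * maxUpdateConst A := by
  obtain ⟨up, hup, h⟩ := hp.exists_upInvA_eq hmk hkn hk
  exact upInvA_fill_cst_le hup h

theorem singleClock_succ (hp : PropSeq A m n qs ctxs cs) (hmk : m ≤ k) (hkn : k < n)
    (hk : maxGuardConst A < cs (k + 1)) (hsc : (ctxs k).SingleClock) :
    (ctxs (k + 1)).SingleClock ∧ (ctxs (k + 1)).shape = (ctxs k).shape ∧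
      cs (k + 1) ≤ cs k + maxUpdateConst A := by
  obtain ⟨up, hup, h⟩ := hp.exists_upInvA_eq hmk hkn hk
  exact upInvA_fill_of_singleClock hup h hsc

theorem shape_succ_eq (hp : PropSeq A m n qs ctxs cs) (hmk : m ≤ k) (hkn : k < n)
    (hk : maxGuardConst A < cs (k + 1)) (hcc : 2 * maxUpdateConst A < cs k + cs (k + 1))
    (hsc : ¬(ctxs (k + 1)).SingleClock) : (ctxs (k + 1)).shape = (ctxs k).shape := by
  obtain ⟨up, hup, h⟩ := hp.exists_upInvA_eq hmk hkn hk
  exact upInvA_fill_shape_eq hup h hcc hsc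

theorem le_of_no_positive_cycle [Fintype Q] (hp : PropSeq A m n qs ctxs cs) (hmn : m ≤ n)
    (hm : cs m ≤ max (maxGuardConst A) (maxUpdateConst A))
    (hlarge : ∀ k, m < k → k ≤ n → max (maxGuardConst A) (maxUpdateConst A) < cs k)
    (hrep : ∀ i j, m < i → i < j → j ≤ n → qs i = qs j → ctxs i = ctxs j → cs j ≤ cs i) :
    cs n ≤ max (maxGuardConst A) (maxUpdateConst A) +
      2 * maxUpdateConst A * Fintype.card Q * Fintype.card X ^ 2 := by
  set B := max (maxGuardConst A) (maxUpdateConst A)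
  set L := maxUpdateConst A
  have hM : ∀ k, m ≤ k → k < n → maxGuardConst A < cs (k + 1) := fun k hk hkn =>
    (le_max_left _ _).trans_lt (hlarge (k + 1) (by omega) (by omega))
  have hcs : ∀ k, m ≤ k → k < n → cs (k + 1) ≤ cs k + 2 * L := fun k hk hkn =>
    hp.cs_succ_le hk hkn (hM k hk hkn)
  have hshape : ∀ k, m < k → k < n → ¬(ctxs (k + 1)).SingleClock →
      (ctxs (k + 1)).shape = (ctxs k).shape := fun k hk hkn => by
    have := hlarge k hk hkn.le
    have := hlarge (k + 1) (by omega) hkn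
    exact hp.shape_succ_eq hk.le hkn (hM k hk.le hkn) (by omega)
  set q := Fintype.card Q with hqdef
  set x := Fintype.card X with hxdef
  have hsplit : 2 * L * q * x ^ 2 = 2 * L * (q * (x * x - x)) + L * (q * x) + L * (q * x) := by
    have hqx : q * (x * x) = q * (x * x - x) + q * x := by
      rw [← mul_add, Nat.sub_add_cancel (Nat.le_mul_self x)]
    rw [mul_assoc (2 * L), sq, hqx]
    ring
  by_cases hS : ∃ s, m < s ∧ s ≤ n ∧ (ctxs s).SingleClock
  · obtain ⟨hms, hsn, hs⟩ := Nat.find_spec hS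
    set s := Nat.find hS
    have hbefore : ∀ k, m < k → k ≤ s - 1 → ¬(ctxs k).SingleClock := fun k hk hks hsk =>
      Nat.find_min hS (by omega) ⟨hk, by omega, hsk⟩
    have h1 := le_add_of_forall_not_singleClock (by omega) hbefore
      (fun k hk hks => hshape k hk (by omega) (hbefore (k + 1) (by omega) (by omega)))
      (fun k hk hks => hcs k hk (by omega)) (fun i j hi hij hj => hrep i j hi hij (by omega))
    have h2 := hcs (s - 1) (by omega) (by omega)
    rw [Nat.sub_add_cancel (by omega)] at h2
    have h3 := add_le_add_of_singleClock (qs := qs) (L := L) hsn hs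
      (fun k hk hkn => hp.singleClock_succ (by omega) hkn (hM k (by omega) hkn))
      (fun i j hi hij hj => hrep i j (by omega) hij hj)
    rw [← hqdef, ← hxdef] at h1 h3
    have hq : 0 < q := Fintype.card_pos_iff.2 ⟨qs 0⟩
    have hx : 0 < x := Fintype.card_pos_iff.2 ⟨(ctxs s).clocks.1⟩
    have hLqx : L ≤ L * (q * x) := Nat.le_mul_of_pos_right L (Nat.mul_pos hq hx)
    omega
  · push Not at hS
    have := le_add_of_forall_not_singleClock hmn hS
      (fun k hk hkn => hshape k hk hkn (hS (k + 1) (by omega) (by omega))) hcs hrep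
    rw [← hqdef, ← hxdef] at this
    omega

end PropSeq

end Automaton

theorem stmt15_general {Q X : Type} [Fintype Q] [Fintype X] (A : UTA Q X)
    (n : ℕ) (qs : ℕ → Q) (ctxs : ℕ → Ctx X) (cs : ℕ → ℕ)
    (hp : PropSeq A 0 n qs ctxs cs)
    (h0 : cs 0 ≤ max (maxGuardConst A) (maxUpdateConst A))
    (hn : max (maxGuardConst A) (maxUpdateConst A) +
        2 * maxUpdateConst A * Fintype.card Q * Fintype.card X ^ 2 < cs n) :
    ∃ i j, 0 < i ∧ i < j ∧ j ≤ n ∧ qs i = qs j ∧ ctxs i = ctxs j ∧ cs i < cs j ∧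
      ∀ k, i ≤ k → k ≤ j → max (maxGuardConst A) (maxUpdateConst A) < cs k := by
  set B := max (maxGuardConst A) (maxUpdateConst A)
  obtain ⟨m, hmn, hm, hlarge⟩ := exists_last_index_of_not (P := fun k => cs k ≤ B) h0
    (show ¬cs n ≤ B by omega)
  by_contra hcon
  push Not at hcon
  have hrep : ∀ i j, m < i → i < j → j ≤ n → qs i = qs j → ctxs i = ctxs j → cs j ≤ cs i := by
    intro i j hi hij hj hq hctx
    by_contra hlt
    obtain ⟨k, hik, hkj, hk⟩ := hcon i j (by omega) hij hj hq hctx (not_le.1 hlt)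
    exact hlarge k (by omega) (by omega) hk
  have := PropSeq.le_of_no_positive_cycle (fun k hk => hp k (Nat.zero_le k)) hmn.le hm
    (fun k hk hkn => not_le.1 (hlarge k hk hkn)) hrep
  omega

/-- Lemma `large-cycle`. A propagation sequence starting with a
small constant and ending with a constant larger than
`max(M,L) + 2·L·|Q|·|X|²` contains a positive cycle with large constants. -/
theorem stmt15 {Q X : Type} [Fintype Q] [Fintype X] (A : UTA Q X)
    (hw : weakGuards A) (n : ℕ) (qs : ℕ → Q) (ctxs : ℕ → Ctx X) (cs : ℕ → ℕ)
    (hp : PropSeq A 0 n qs ctxs cs)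
    (h0 : cs 0 ≤ max (maxGuardConst A) (maxUpdateConst A))
    (hn : max (maxGuardConst A) (maxUpdateConst A) +
        2 * maxUpdateConst A * Fintype.card Q * Fintype.card X ^ 2 < cs n) :
    ∃ i j, 0 < i ∧ i < j ∧ j ≤ n ∧ qs i = qs j ∧ ctxs i = ctxs j ∧ cs i < cs j ∧
      ∀ k, i ≤ k → k ≤ j → max (maxGuardConst A) (maxUpdateConst A) < cs k :=
  stmt15_general A n qs ctxs cs hp h0 hn
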